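/- Let n ≥ 2, assume condition (ON), and let S, W be two adjacent vertices of G(V) (so S ≠ W and S ⊥ W). Then there is a bijection between the set {T : T is a 1-dimensional non-degenerate subspace of V, T ≤ S^⊥, and T + W is degenerate} and the set {v ∈ V : v ≠ 0, v ∈ (S + W)^⊥, and Ψ(v,v) = 0}. -/

import Mathlib

/-!
Write `W = K ∙ w`; then `Ψ(w, w) ≠ 0`, and the bijection is `v ↦ K ∙ (v + w)`. Everything
rests on one fact: for `v ⊥ w` the plane `⟨v, w⟩` is degenerate iff `v` is a nonzero isotropic
vector. Applied to `v + w`, it shows the line is of the required kind. Conversely, a line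
`K ∙ t` with `K ∙ t + W` degenerate cannot have `t ⊥ w` (as `Ψ(t, t) ≠ 0`), so `t` rescales
uniquely to `v + w` with `v ⊥ w`, and then `v` is nonzero isotropic.
-/

namespace FramePaper

variable {K : Type*} [Field K]

/-- The standard Hermitian form `Ψ(v,w) = ∑ i, v i * τ (w i)` on `Fin n → K`. -/
def Psi (τ : K → K) {n : ℕ} (v w : Fin n → K) : K :=
  ∑ i, v i * τ (w i)

lemma Psi_add_left (τ : K → K) {n : ℕ} (a b w : Fin n → K) :
    Psi τ (a + b) w = Psi τ a w + Psi τ b w := by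
  simp [Psi, add_mul, Finset.sum_add_distrib]

lemma Psi_smul_left (τ : K → K) {n : ℕ} (c : K) (a w : Fin n → K) :
    Psi τ (c • a) w = c * Psi τ a w := by
  simp [Psi, Finset.mul_sum, mul_assoc]

/-- The orthogonal complement `S^⊥ = {v | ∀ s ∈ S, Ψ(v,s) = 0}`. -/
def perp (τ : K → K) {n : ℕ} (S : Submodule K (Fin n → K)) :
    Submodule K (Fin n → K) where
  carrier := {v | ∀ s ∈ S, Psi τ v s = 0}
  add_mem' := by
    intro a b ha hb
    show ∀ s ∈ S, Psi τ (a + b) s = 0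
    intro s hs
    rw [Psi_add_left, ha s hs, hb s hs, add_zero]
  zero_mem' := by
    show ∀ s ∈ S, Psi τ 0 s = 0
    intro s hs
    simp [Psi]
  smul_mem' := by
    intro c a ha
    show ∀ s ∈ S, Psi τ (c • a) s = 0
    intro s hs
    rw [Psi_smul_left, ha s hs, mul_zero]

/-- A subspace `S` is non-degenerate iff `S ⊓ S^⊥ = ⊥`. -/
def Nondeg (τ : K → K) {n : ℕ} (S : Submodule K (Fin n → K)) : Prop :=
  S ⊓ perp τ S = ⊥

/-- Vertices of `G(V)`: the `1`-dimensional non-degenerate subspaces. -/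
def IsVertex (τ : K → K) {n : ℕ} (S : Submodule K (Fin n → K)) : Prop :=
  Module.finrank K S = 1 ∧ Nondeg τ S

/-- The graph `G(V)` on the `1`-dimensional non-degenerate subspaces of `V = Fin n → K`,
with `S, W` adjacent iff `S ≠ W` and `Ψ(s,w) = 0` for all `s ∈ S`, `w ∈ W`. -/
def FrameGraph (τ : K →+* K) (hτ2 : ∀ x, τ (τ x) = x) (n : ℕ) :
    SimpleGraph {S : Submodule K (Fin n → K) // IsVertex (⇑τ) S} where
  Adj S W := S ≠ W ∧ ∀ s ∈ S.1, ∀ w ∈ W.1, Psi (⇑τ) s w = 0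
  symm := by
    constructor
    rintro S W ⟨hne, h⟩
    refine ⟨hne.symm, fun w hw s hs => ?_⟩
    have key : Psi (⇑τ) w s = τ (Psi (⇑τ) s w) := by
      simp only [Psi, map_sum, map_mul, hτ2]
      exact Finset.sum_congr rfl fun i _ => mul_comm _ _
    rw [key, h s hs w hw, map_zero]
  loopless := ⟨fun S h => h.1 rfl⟩

open Submodule

lemma exists_eq_span_singleton_of_finrank_eq_one {V : Type*} [AddCommGroup V] [Module K V]
    {X : Submodule K V} (h : Module.finrank K X = 1) : ∃ t, X = K ∙ t := by
  obtain ⟨t, htX, ht0⟩ := X.exists_mem_ne_zero_of_ne_bot (by rintro rfl; simp at h)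
  exact ⟨t, eq_span_singleton_of_mem_of_finrank_eq_one h htX ht0⟩

section Psi

variable (τ : K →+* K) {n : ℕ}

lemma Psi_add_right (v a b : Fin n → K) :
    Psi τ v (a + b) = Psi τ v a + Psi τ v b := by
  simp [Psi, mul_add, Finset.sum_add_distrib]

lemma Psi_smul_right (c : K) (v w : Fin n → K) :
    Psi τ v (c • w) = τ c * Psi τ v w := by
  simp [Psi, Finset.mul_sum, mul_left_comm]

lemma Psi_sub_left (a b w : Fin n → K) :
    Psi τ (a - b) w = Psi τ a w - Psi τ b w := by
  simp [Psi, sub_mul, Finset.sum_sub_distrib]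

lemma Psi_zero_left (w : Fin n → K) : Psi τ 0 w = 0 := by
  simp [Psi]

variable {τ}

lemma map_Psi (hτ2 : ∀ x, τ (τ x) = x) (v w : Fin n → K) : τ (Psi τ v w) = Psi τ w v := by
  simp only [Psi, map_sum, map_mul, hτ2]
  exact Finset.sum_congr rfl fun i _ => mul_comm _ _

lemma Psi_eq_zero_comm (hτ2 : ∀ x, τ (τ x) = x) {v w : Fin n → K} (h : Psi τ v w = 0) :
    Psi τ w v = 0 := by
  rw [← map_Psi hτ2, h, map_zero]

lemma Psi_add_self_of_Psi_eq_zero (hτ2 : ∀ x, τ (τ x) = x) {v w : Fin n → K}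
    (h : Psi τ v w = 0) : Psi τ (v + w) (v + w) = Psi τ v v + Psi τ w w := by
  rw [Psi_add_left, Psi_add_right, Psi_add_right, h, Psi_eq_zero_comm hτ2 h]
  ring

end Psi

section

variable {τ : K →+* K} {n : ℕ}

lemma mem_perp_span_singleton {v w : Fin n → K} : v ∈ perp τ (K ∙ w) ↔ Psi τ v w = 0 := by
  refine ⟨fun h => h w (mem_span_singleton_self w), fun h s hs => ?_⟩
  obtain ⟨c, rfl⟩ := mem_span_singleton.mp hs
  rw [Psi_smul_right, h, mul_zero]

lemma perp_sup (S W : Submodule K (Fin n → K)) : perp τ (S ⊔ W) = perp τ S ⊓ perp τ W := by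
  ext v
  refine ⟨fun h => ⟨fun s hs => h s (mem_sup_left hs), fun s hs => h s (mem_sup_right hs)⟩,
    fun ⟨hS, hW⟩ x hx => ?_⟩
  obtain ⟨y, hy, z, hz, rfl⟩ := mem_sup.mp hx
  rw [Psi_add_right, hS y hy, hW z hz, add_zero]

lemma not_nondeg_iff {X : Submodule K (Fin n → K)} :
    ¬ Nondeg τ X ↔ ∃ v ∈ X, v ∈ perp τ X ∧ v ≠ 0 := by
  simp only [Nondeg, ← ne_eq, Submodule.ne_bot_iff, mem_inf, and_assoc]

lemma not_nondeg_span_singleton_iff {t : Fin n → K} :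
    ¬ Nondeg τ (K ∙ t) ↔ t ≠ 0 ∧ Psi τ t t = 0 := by
  simp only [not_nondeg_iff, mem_perp_span_singleton, mem_span_singleton]
  constructor
  · rintro ⟨_, ⟨c, rfl⟩, hc, hc0⟩
    rw [Psi_smul_left] at hc
    exact ⟨right_ne_zero_of_smul hc0,
      (mul_eq_zero.mp hc).resolve_left (left_ne_zero_of_smul hc0)⟩
  · rintro ⟨ht0, ht⟩
    exact ⟨t, ⟨1, one_smul K t⟩, ht, ht0⟩

lemma isVertex_span_singleton_iff {t : Fin n → K} :
    IsVertex τ (K ∙ t) ↔ Psi τ t t ≠ 0 := by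
  constructor
  · rintro ⟨hrank, hnd⟩ ht
    have ht0 : t ≠ 0 := by
      rintro rfl
      rw [span_singleton_eq_bot.mpr rfl, finrank_bot] at hrank
      exact zero_ne_one hrank
    exact not_nondeg_span_singleton_iff.mpr ⟨ht0, ht⟩ hnd
  · intro h
    have ht0 : t ≠ 0 := by rintro rfl; exact h (Psi_zero_left τ 0)
    refine ⟨finrank_span_singleton ht0, not_not.mp fun hnd => ?_⟩
    exact h (not_nondeg_span_singleton_iff.mp hnd).2

lemma span_pair_add_left (v w : Fin n → K) : span K {v + w, w} = span K {v, w} := by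
  refine le_antisymm (span_le.mpr ?_) (span_le.mpr ?_) <;> rintro _ (rfl | rfl)
  · exact mem_span_pair.mpr ⟨1, 1, by simp⟩
  · exact subset_span (by simp)
  · exact mem_span_pair.mpr ⟨1, -1, by simp⟩
  · exact subset_span (by simp)

lemma not_nondeg_span_pair_iff (hτ2 : ∀ x, τ (τ x) = x) {v w : Fin n → K}
    (hvw : Psi τ v w = 0) (hw : Psi τ w w ≠ 0) :
    ¬ Nondeg τ (span K {v, w}) ↔ v ≠ 0 ∧ Psi τ v v = 0 := by
  have hwv := Psi_eq_zero_comm hτ2 hvw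
  rw [not_nondeg_iff]
  constructor
  · rintro ⟨x, hx, hxperp, hx0⟩
    obtain ⟨a, b, rfl⟩ := mem_span_pair.mp hx
    have hxw := hxperp w (subset_span (by simp))
    have hxv := hxperp v (subset_span (by simp))
    rw [Psi_add_left, Psi_smul_left, Psi_smul_left, hvw, mul_zero, zero_add] at hxw
    rw [Psi_add_left, Psi_smul_left, Psi_smul_left, hwv, mul_zero, add_zero] at hxv
    obtain rfl : b = 0 := (mul_eq_zero.mp hxw).resolve_right hw
    rw [zero_smul, add_zero] at hx0
    exact ⟨right_ne_zero_of_smul hx0,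
      (mul_eq_zero.mp hxv).resolve_left (left_ne_zero_of_smul hx0)⟩
  · rintro ⟨hv0, hv⟩
    refine ⟨v, subset_span (by simp), fun x hx => ?_, hv0⟩
    obtain ⟨a, b, rfl⟩ := mem_span_pair.mp hx
    rw [Psi_add_right, Psi_smul_right, Psi_smul_right, hv, hvw, mul_zero, mul_zero, add_zero]

lemma exists_span_add_eq {t w : Fin n → K} (hw : Psi τ w w ≠ 0) (htw : Psi τ t w ≠ 0) :
    ∃ v, Psi τ v w = 0 ∧ K ∙ (v + w) = K ∙ t := by
  refine ⟨(Psi τ w w / Psi τ t w) • t - w, ?_, ?_⟩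
  · rw [Psi_sub_left, Psi_smul_left, div_mul_cancel₀ _ htw, sub_self]
  · rw [sub_add_cancel, span_singleton_smul_eq (div_ne_zero hw htw).isUnit]

/-- The scaling of `v + w` is pinned down by `Ψ(v + w, w) = Ψ(w, w)`. -/
lemma eq_of_span_add_eq {v v' w : Fin n → K} (hvw : Psi τ v w = 0) (hv'w : Psi τ v' w = 0)
    (hw : Psi τ w w ≠ 0) (h : K ∙ (v + w) = K ∙ (v' + w)) : v = v' := by
  obtain ⟨c, hc⟩ := mem_span_singleton.mp (h ▸ mem_span_singleton_self (v + w))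
  have hc1 : c = 1 := by
    have := congrArg (Psi τ · w) hc
    simp only [Psi_smul_left, Psi_add_left, hvw, hv'w, zero_add] at this
    exact (mul_eq_right₀ hw).mp this
  rwa [hc1, one_smul, add_left_inj, eq_comm] at hc

lemma isVertex_span_add_and_not_nondeg (hτ2 : ∀ x, τ (τ x) = x)
    {S : Submodule K (Fin n → K)} {v w : Fin n → K}
    (hw : Psi τ w w ≠ 0) (hwS : w ∈ perp τ S)
    (hv : v ≠ 0 ∧ v ∈ perp τ (S ⊔ K ∙ w) ∧ Psi τ v v = 0) :
    IsVertex τ (K ∙ (v + w)) ∧ K ∙ (v + w) ≤ perp τ S ∧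
      ¬ Nondeg τ ((K ∙ (v + w)) ⊔ K ∙ w) := by
  obtain ⟨hv0, hvperp, hvv⟩ := hv
  rw [perp_sup, mem_inf, mem_perp_span_singleton] at hvperp
  obtain ⟨hvS, hvw⟩ := hvperp
  refine ⟨?_, ?_, ?_⟩
  · rwa [isVertex_span_singleton_iff, Psi_add_self_of_Psi_eq_zero hτ2 hvw, hvv, zero_add]
  · rw [span_singleton_le_iff_mem]
    exact add_mem hvS hwS
  · rw [← span_insert, span_pair_add_left, not_nondeg_span_pair_iff hτ2 hvw hw]
    exact ⟨hv0, hvv⟩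

lemma exists_eq_span_add_of_isVertex_of_not_nondeg (hτ2 : ∀ x, τ (τ x) = x)
    {S T : Submodule K (Fin n → K)} {w : Fin n → K}
    (hw : Psi τ w w ≠ 0) (hwS : w ∈ perp τ S)
    (hT : IsVertex τ T ∧ T ≤ perp τ S ∧ ¬ Nondeg τ (T ⊔ K ∙ w)) :
    ∃ v, (v ≠ 0 ∧ v ∈ perp τ (S ⊔ K ∙ w) ∧ Psi τ v v = 0) ∧
      K ∙ (v + w) = T := by
  obtain ⟨hTv, hTS, hdeg⟩ := hT
  obtain ⟨t, rfl⟩ := exists_eq_span_singleton_of_finrank_eq_one hTv.1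
  rw [isVertex_span_singleton_iff] at hTv
  have htw : Psi τ t w ≠ 0 := by
    intro htw
    rw [← span_insert, not_nondeg_span_pair_iff hτ2 htw hw] at hdeg
    exact hTv hdeg.2
  obtain ⟨v, hvw, hvt⟩ := exists_span_add_eq hw htw
  rw [← hvt, ← span_insert, span_pair_add_left, not_nondeg_span_pair_iff hτ2 hvw hw] at hdeg
  rw [← hvt, span_singleton_le_iff_mem] at hTS
  refine ⟨v, ⟨hdeg.1, ?_, hdeg.2⟩, hvt⟩
  rw [perp_sup, mem_inf, mem_perp_span_singleton]
  exact ⟨by simpa using sub_mem hTS hwS, hvw⟩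

end

theorem statement18_general (τ : K →+* K) (hτ2 : ∀ x, τ (τ x) = x)
    (n : ℕ)
    (S W : Submodule K (Fin n → K))
    (hW : IsVertex (⇑τ) W)
    (hperp : ∀ s ∈ S, ∀ w ∈ W, Psi (⇑τ) s w = 0) :
    Nonempty
      ({T : Submodule K (Fin n → K) //
          IsVertex (⇑τ) T ∧ T ≤ perp (⇑τ) S ∧ ¬ Nondeg (⇑τ) (T ⊔ W)} ≃
        {v : Fin n → K // v ≠ 0 ∧ v ∈ perp (⇑τ) (S ⊔ W) ∧ Psi (⇑τ) v v = 0}) := by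
  obtain ⟨w, rfl⟩ := exists_eq_span_singleton_of_finrank_eq_one hW.1
  have hw : Psi τ w w ≠ 0 := isVertex_span_singleton_iff.mp hW
  have hwS : w ∈ perp τ S := fun s hs =>
    Psi_eq_zero_comm hτ2 (hperp s hs w (mem_span_singleton_self w))
  have hvw {v : Fin n → K} (hv : v ∈ perp τ (S ⊔ K ∙ w)) : Psi τ v w = 0 :=
    hv w (mem_sup_right (mem_span_singleton_self w))
  let f (v : {v : Fin n → K // v ≠ 0 ∧ v ∈ perp τ (S ⊔ K ∙ w) ∧ Psi τ v v = 0}) :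
      {T : Submodule K (Fin n → K) //
        IsVertex τ T ∧ T ≤ perp τ S ∧ ¬ Nondeg τ (T ⊔ K ∙ w)} :=
    ⟨K ∙ (v.1 + w), isVertex_span_add_and_not_nondeg hτ2 hw hwS v.2⟩
  refine ⟨(Equiv.ofBijective f ⟨fun v v' h => Subtype.ext ?_, fun T => ?_⟩).symm⟩
  · exact eq_of_span_add_eq (hvw v.2.2.1) (hvw v'.2.2.1) hw (congrArg Subtype.val h)
  · obtain ⟨v, hv, hvT⟩ := exists_eq_span_add_of_isVertex_of_not_nondeg hτ2 hw hwS T.2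
    exact ⟨⟨v, hv⟩, Subtype.ext hvT⟩

/-- For `n ≥ 2`, under condition (ON), if `S, W` are adjacent vertices
of `G(V)` (so `S ≠ W` and `S ⊥ W`), then there is a bijection between the set of vertices
`T ≤ S^⊥` with `T + W` degenerate, and the set of nonzero isotropic vectors of
`(S + W)^⊥`. -/
theorem statement18 (τ : K →+* K) (hτne : (⇑τ : K → K) ≠ id) (hτ2 : ∀ x, τ (τ x) = x)
    (n : ℕ) (hn : 2 ≤ n)
    (hON : ∀ v : Fin n → K, ∃ x : K, Psi (⇑τ) v v = x * τ x)
    (S W : Submodule K (Fin n → K))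
    (hS : IsVertex (⇑τ) S) (hW : IsVertex (⇑τ) W) (hne : S ≠ W)
    (hperp : ∀ s ∈ S, ∀ w ∈ W, Psi (⇑τ) s w = 0) :
    Nonempty
      ({T : Submodule K (Fin n → K) //
          IsVertex (⇑τ) T ∧ T ≤ perp (⇑τ) S ∧ ¬ Nondeg (⇑τ) (T ⊔ W)} ≃
        {v : Fin n → K // v ≠ 0 ∧ v ∈ perp (⇑τ) (S ⊔ W) ∧ Psi (⇑τ) v v = 0}) :=
  statement18_general τ hτ2 n S W hW hperp

end FramePaper
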